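/- Let N, M, D, L, n be integers with N ≥ 1, 1 ≤ M ≤ D, M + D ≤ N, L ≥ 0 and n ≥ L + D, and let Δ₁ > 0, ε ∈ (0,1), C₀ ≥ 0 and κ > 0, with the additional requirement κ > L/N in the case M + D = N. Suppose V : ℝ² × [τ₁,∞) → ℝ is C¹ and for every τ ≥ τ₁ and every (ρ,φ) with W₀(ρ,φ,τ₁) ≤ Δ₁² one has (1−ε) W₀(ρ,φ,τ) ≤ V(ρ,φ,τ) ≤ (1+ε) W₀(ρ,φ,τ) and 𝒟V(ρ,φ,τ) ≤ −κ τ^{−(M+D)/N} V(ρ,φ,τ) + C₀ τ^{−(M+n+1)/N} (Q|ρ| + τ^{−L/N} λ₀ |φ|). Then the zero solution is stable and attracting in the following sense: for every ε' ∈ (0,Δ₁) there exist δ > 0 and τ_s ≥ τ₁ such that every solution (ρ(τ),φ(τ)) with W₀(ρ(τ_s),φ(τ_s),τ₁) ≤ δ² satisfies W₀(ρ(τ),φ(τ),τ₁) ≤ ε'² for all τ ≥ τ_s; moreover there exist η > 0 and C > 0 (depending on the data) such that such solutions satisfy W₀(ρ(τ),φ(τ),τ₁) ≤ C τ^{−η}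 for all sufficiently large τ, and in particular (ρ(τ),φ(τ)) → (0,0) as τ → ∞. -/

import Mathlib

open Real

/-- `W₀(ρ,φ,τ) = (Q ρ² + τ^{−L/N} λ₀ φ²)/2`. -/
noncomputable def W0 (Q lam0 : ℝ) (N L : ℕ) (ρ φ τ : ℝ) : ℝ :=
  (Q * ρ ^ 2 + τ ^ (-(L : ℝ) / (N : ℝ)) * lam0 * φ ^ 2) / 2

/-- Derivative of `V` along the system `dρ/dτ = τ^{−M/N} A(ρ,φ,τ)`,
`dφ/dτ = τ^{−M/N} B(ρ,φ,τ)`: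
`𝒟V = ∂_τV + τ^{−M/N}(A ∂_ρV + B ∂_φV)`. -/
noncomputable def DV (N M : ℕ) (A B V : ℝ → ℝ → ℝ → ℝ) (ρ φ τ : ℝ) : ℝ :=
  deriv (fun t => V ρ φ t) τ +
    τ ^ (-(M : ℝ) / (N : ℝ)) *
      (A ρ φ τ * deriv (fun r => V r φ τ) ρ + B ρ φ τ * deriv (fun p => V ρ p τ) φ)

/-- A solution on `[τ₁,∞)` of the planar system
`dρ/dτ = τ^{−M/N} A(ρ,φ,τ)`, `dφ/dτ = τ^{−M/N} B(ρ,φ,τ)`. -/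
def IsSolution (N M : ℕ) (A B : ℝ → ℝ → ℝ → ℝ) (τ₁ : ℝ) (ρ φ : ℝ → ℝ) : Prop :=
  ∀ τ ≥ τ₁, HasDerivAt ρ (τ ^ (-(M : ℝ) / (N : ℝ)) * A (ρ τ) (φ τ) τ) τ ∧
    HasDerivAt φ (τ ^ (-(M : ℝ) / (N : ℝ)) * B (ρ τ) (φ τ) τ) τ

/-!
Barrier argument. Write `a = (M+D)/N`, `b = (M+n+1)/N` and pick an exponent `μ` with
`L/N < μ < 2(b - a)`, and `μ < κ` when `a = 1`. Along a solution `v(τ) = V(ρ(τ),φ(τ),τ)`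
cannot reach the barrier `K τ^{-μ}` from below while the solution stays in the region: at a
contact point the disturbance is `O(τ^{-b} √W₀) = O(τ^{-b-μ/2})`, so the decay estimate makes
`v'` smaller than the barrier's derivative `-μ K τ^{-μ-1}` once `τ` is large. The sandwich then
gives `W₀(·,τ₁) ≤ τ^{L/N} W₀(·,τ) = O(τ^{L/N-μ})`, which keeps the solution in the region and
is the polynomial decay.
-/

open Real Filter Set Topology

theorem le_and_le_of_deriv_lt_deriv_boundary {v w G v' w' : ℝ → ℝ} {a Δ : ℝ}
    (hv : ∀ t ≥ a, HasDerivAt v (v' t) t) (hw : ∀ t ≥ a, HasDerivAt w (w' t) t)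
    (hG : ∀ t ≥ a, ContinuousAt G t) (hva : v a ≤ w a) (hGa : G a ≤ Δ)
    (hGlt : ∀ t ≥ a, v t ≤ w t → G t ≤ Δ → G t < Δ)
    (hbd : ∀ t ≥ a, G t ≤ Δ → v t = w t → v' t < w' t) :
    ∀ t ≥ a, v t ≤ w t ∧ G t ≤ Δ := by
  have hgap : ∀ t ≥ a, ContinuousAt (fun s => w s - v s) t :=
    fun t ht => (hw t ht).continuousAt.sub (hv t ht).continuousAt
  intro b hb
  let s := {t | 0 ≤ w t - v t} ∩ {t | G t ≤ Δ}
  have hcont {f : ℝ → ℝ} (hf : ∀ t ≥ a, ContinuousAt f t) : ContinuousOn f (Icc a b) :=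
    fun t ht => (hf t ht.1).continuousWithinAt
  have hclosed : IsClosed (s ∩ Icc a b) := by
    have h₁ := (hcont hgap).preimage_isClosed_of_isClosed isClosed_Icc (isClosed_Ici (a := 0))
    have h₂ := (hcont hG).preimage_isClosed_of_isClosed isClosed_Icc (isClosed_Iic (a := Δ))
    convert h₁.inter h₂ using 1
    ext t
    simp only [s, mem_inter_iff, mem_ofPred_eq, mem_preimage, mem_Ici, mem_Iic]
    tauto
  have hmem : b ∈ s := by
    refine hclosed.Icc_subset_of_forall_mem_nhdsWithin ⟨sub_nonneg.2 hva, hGa⟩ ?_ ⟨hb, le_rfl⟩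
    rintro x ⟨⟨hvw : 0 ≤ w x - v x, hGx : G x ≤ Δ⟩, hxa, -⟩
    have hG_near : ∀ᶠ t in 𝓝 x, G t < Δ :=
      (hG x hxa).eventually (gt_mem_nhds (hGlt x hxa (sub_nonneg.1 hvw) hGx))
    have hgap_near : ∀ᶠ t in 𝓝[>] x, 0 < w t - v t := by
      rcases hvw.lt_or_eq with hlt | heq
      · exact nhdsWithin_le_nhds ((hgap x hxa).eventually (lt_mem_nhds hlt))
      · have hderiv : deriv (fun s => w s - v s) x > 0 := by
          have hd : HasDerivAt (fun s => w s - v s) (w' x - v' x) x := (hw x hxa).sub (hv x hxa)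
          rw [hd.deriv]
          exact sub_pos.2 (hbd x hxa hGx (sub_eq_zero.1 heq.symm).symm)
        filter_upwards [nhdsWithin_le_nhds (eventually_nhdsWithin_sign_eq_of_deriv_pos hderiv
          heq.symm), self_mem_nhdsWithin] with t hsign ht
        rwa [sign_pos (sub_pos.2 (show x < t from ht)), sign_eq_one_iff] at hsign
    filter_upwards [hgap_near, nhdsWithin_le_nhds hG_near] with t h₁ h₂ using ⟨h₁.le, h₂.le⟩
  exact ⟨sub_nonneg.1 hmem.1, hmem.2⟩

theorem eventually_mul_rpow_add_mul_rpow_lt {a μ κ c e : ℝ} (ha : a ≤ 1) (hκ : 0 < κ)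
    (hμκ : a = 1 → μ < κ) (he : 0 < e) :
    ∀ᶠ t in atTop, μ * t ^ (a - 1) + c * t ^ (-e) < κ := by
  have hc : Tendsto (fun t : ℝ => c * t ^ (-e)) atTop (𝓝 0) := by
    simpa using (tendsto_rpow_neg_atTop he).const_mul c
  rcases ha.lt_or_eq with ha | rfl
  · have hμ : Tendsto (fun t : ℝ => μ * t ^ (a - 1)) atTop (𝓝 0) := by
      simpa using (tendsto_rpow_neg_atTop (neg_pos.2 (sub_neg.2 ha))).const_mul μ
    exact (hμ.add hc).eventually_lt_const (by simpa using hκ)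
  · simpa using (hc.const_add μ).eventually_lt_const (by simpa using hμκ rfl)

theorem lt_deriv_barrier {t a b μ κ K c : ℝ} (ht : 0 < t) (hK : 0 < K)
    (h : μ * t ^ (a - 1) + c / √K * t ^ (-(b - a - μ / 2)) < κ) :
    -κ * t ^ (-a) * (K * t ^ (-μ)) + c * t ^ (-b) * √(K * t ^ (-μ)) <
      K * (-μ * t ^ (-μ - 1)) := by
  have hpos : 0 < K * t ^ (-μ - a) := mul_pos hK (rpow_pos_of_pos ht _)
  have e₁ : t ^ (-μ - a) * t ^ (a - 1) = t ^ (-μ - 1) := by rw [← rpow_add ht]; ring_nf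
  have e₂ : t ^ (-μ - a) * t ^ (-(b - a - μ / 2)) = t ^ (-b) * t ^ (-μ / 2) := by
    rw [← rpow_add ht, ← rpow_add ht]; ring_nf
  have e₃ : t ^ (-μ - a) = t ^ (-a) * t ^ (-μ) := by rw [← rpow_add ht]; ring_nf
  have e₄ : √(K * t ^ (-μ)) = √K * t ^ (-μ / 2) := by
    rw [sqrt_mul hK.le, sqrt_eq_rpow (t ^ _), ← rpow_mul ht.le]; ring_nf
  have e₅ : K / √K = √K := div_sqrt
  have key := mul_lt_mul_of_pos_left h hpos
  rw [e₄]
  calc -κ * t ^ (-a) * (K * t ^ (-μ)) + c * t ^ (-b) * (√K * t ^ (-μ / 2))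
      = -(K * t ^ (-μ - a) * κ) + c * (K / √K) * (t ^ (-b) * t ^ (-μ / 2)) := by
        rw [e₃, e₅]; ring
    _ < -(K * t ^ (-μ - a) * (μ * t ^ (a - 1) + c / √K * t ^ (-(b - a - μ / 2)))) +
        c * (K / √K) * (t ^ (-b) * t ^ (-μ / 2)) := by linarith
    _ = K * (-μ * t ^ (-μ - 1)) := by rw [← e₁, ← e₂]; field_simp; ring

theorem hasDerivAt_comp_curve {V : ℝ → ℝ → ℝ → ℝ} {ρ φ : ℝ → ℝ} {t ρ' φ' : ℝ}
    (hV : DifferentiableAt ℝ (fun p : ℝ × ℝ × ℝ => V p.1 p.2.1 p.2.2) (ρ t, φ t, t))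
    (hρ : HasDerivAt ρ ρ' t) (hφ : HasDerivAt φ φ' t) :
    HasDerivAt (fun s => V (ρ s) (φ s) s)
      (ρ' * deriv (fun r => V r (φ t) t) (ρ t) + φ' * deriv (fun p => V (ρ t) p t) (φ t)
        + deriv (fun u => V (ρ t) (φ t) u) t) t := by
  set F' := fderiv ℝ (fun p : ℝ × ℝ × ℝ => V p.1 p.2.1 p.2.2) (ρ t, φ t, t)
  have hF := hV.hasFDerivAt
  have h₁ : deriv (fun r => V r (φ t) t) (ρ t) = F' (1, 0, 0) := by
    have hc : HasDerivAt (fun r : ℝ => (r, φ t, t)) ((1 : ℝ), (0 : ℝ), (0 : ℝ)) (ρ t) :=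
      (hasDerivAt_id _).prodMk ((hasDerivAt_const _ _).prodMk (hasDerivAt_const _ _))
    exact (hF.comp_hasDerivAt (ρ t) hc).deriv
  have h₂ : deriv (fun p => V (ρ t) p t) (φ t) = F' (0, 1, 0) := by
    have hc : HasDerivAt (fun p : ℝ => (ρ t, p, t)) ((0 : ℝ), (1 : ℝ), (0 : ℝ)) (φ t) :=
      (hasDerivAt_const _ _).prodMk ((hasDerivAt_id _).prodMk (hasDerivAt_const _ _))
    exact (hF.comp_hasDerivAt (φ t) hc).deriv
  have h₃ : deriv (fun u => V (ρ t) (φ t) u) t = F' (0, 0, 1) := by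
    have hc : HasDerivAt (fun u : ℝ => (ρ t, φ t, u)) ((0 : ℝ), (0 : ℝ), (1 : ℝ)) t :=
      (hasDerivAt_const _ _).prodMk ((hasDerivAt_const _ _).prodMk (hasDerivAt_id _))
    exact (hF.comp_hasDerivAt t hc).deriv
  have hsplit : ((ρ', φ', 1) : ℝ × ℝ × ℝ) = ρ' • (1, 0, 0) + φ' • (0, 1, 0) + (0, 0, 1) := by
    ext <;> simp
  have h := hF.comp_hasDerivAt t (hρ.prodMk (hφ.prodMk (hasDerivAt_id t)))
  rw [hsplit, map_add, map_add, map_smul, map_smul, smul_eq_mul, smul_eq_mul] at h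
  rwa [h₁, h₂, h₃]

theorem IsSolution.hasDerivAt_DV {N M : ℕ} {A B V : ℝ → ℝ → ℝ → ℝ} {τ₁ : ℝ} {ρ φ : ℝ → ℝ}
    (hsol : IsSolution N M A B τ₁ ρ φ)
    (hV : Differentiable ℝ fun p : ℝ × ℝ × ℝ => V p.1 p.2.1 p.2.2) {t : ℝ} (ht : τ₁ ≤ t) :
    HasDerivAt (fun s => V (ρ s) (φ s) s) (DV N M A B V (ρ t) (φ t) t) t := by
  obtain ⟨hρ, hφ⟩ := hsol t ht
  convert hasDerivAt_comp_curve (hV _) hρ hφ using 1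
  unfold DV
  ring

theorem neg_div_natCast_nonpos (L N : ℕ) : -(L : ℝ) / N ≤ 0 :=
  div_nonpos_of_nonpos_of_nonneg (neg_nonpos.2 (Nat.cast_nonneg _)) (Nat.cast_nonneg _)

section W0

variable {Q lam0 : ℝ} (N L : ℕ)

theorem W0_nonneg (hQ : 0 ≤ Q) (hlam0 : 0 ≤ lam0) {τ : ℝ} (hτ : 0 ≤ τ) (ρ φ : ℝ) :
    0 ≤ W0 Q lam0 N L ρ φ τ := by
  unfold W0; positivity

theorem W0_le_W0_of_le (hlam0 : 0 ≤ lam0) {τ₁ τ : ℝ} (hτ₁ : 0 < τ₁) (hτ : τ₁ ≤ τ) (ρ φ : ℝ) :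
    W0 Q lam0 N L ρ φ τ ≤ W0 Q lam0 N L ρ φ τ₁ := by
  have : τ ^ (-(L : ℝ) / N) ≤ τ₁ ^ (-(L : ℝ) / N) :=
    rpow_le_rpow_of_nonpos hτ₁ hτ (neg_div_natCast_nonpos L N)
  unfold W0
  gcongr

theorem W0_le_rpow_mul_W0 (hQ : 0 ≤ Q) (hlam0 : 0 ≤ lam0) {τ₁ τ : ℝ} (hτ₁ : 1 ≤ τ₁)
    (hτ : τ₁ ≤ τ) (ρ φ : ℝ) :
    W0 Q lam0 N L ρ φ τ₁ ≤ τ ^ ((L : ℝ) / N) * W0 Q lam0 N L ρ φ τ := by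
  have hτ0 : 0 < τ := by linarith
  have hexp : (0 : ℝ) ≤ L / N := by positivity
  have h₁ : 1 ≤ τ ^ ((L : ℝ) / N) := one_le_rpow (by linarith) hexp
  have h₂ : τ₁ ^ (-(L : ℝ) / N) ≤ 1 :=
    rpow_le_one_of_one_le_of_nonpos hτ₁ (neg_div_natCast_nonpos L N)
  have h₃ : τ ^ ((L : ℝ) / N) * τ ^ (-(L : ℝ) / N) = 1 := by
    rw [← rpow_add hτ0, neg_div, add_neg_cancel, rpow_zero]
  have hρ : 0 ≤ Q * ρ ^ 2 := by positivity
  have hφ : 0 ≤ lam0 * φ ^ 2 := by positivity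
  unfold W0
  nlinarith

theorem forcing_le_sqrt_W0 (hQ : 0 ≤ Q) (hlam0 : 0 ≤ lam0) {τ : ℝ} (hτ : 1 ≤ τ) (ρ φ : ℝ) :
    Q * |ρ| + τ ^ (-(L : ℝ) / N) * lam0 * |φ| ≤ 2 * √(Q + lam0) * √(W0 Q lam0 N L ρ φ τ) := by
  set s := τ ^ (-(L : ℝ) / N)
  have hs0 : 0 ≤ s := rpow_nonneg (by linarith) _
  have hs1 : s ≤ 1 := rpow_le_one_of_one_le_of_nonpos hτ (neg_div_natCast_nonpos L N)
  rw [← sqrt_mul_self zero_le_two, ← sqrt_mul (by positivity), ← sqrt_mul (by positivity)]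
  apply le_sqrt_of_sq_le
  have hρ : Q * |ρ| ^ 2 ≤ (Q + lam0) * |ρ| ^ 2 := by nlinarith [sq_nonneg |ρ|]
  have hφ : s * lam0 * |φ| ^ 2 ≤ (Q + lam0) * |φ| ^ 2 := by
    nlinarith [sq_nonneg |φ|, mul_le_mul_of_nonneg_right hs1 hlam0]
  unfold W0
  rw [← sq_abs ρ, ← sq_abs φ]
  nlinarith [sq_nonneg (Q * |ρ| - s * lam0 * |φ|), mul_le_mul_of_nonneg_left hρ hQ,
    mul_le_mul_of_nonneg_left hφ (mul_nonneg hs0 hlam0)]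

theorem tendsto_zero_of_tendsto_W0 {ι : Type*} {l : Filter ι} (hQ : 0 < Q) (hlam0 : 0 < lam0)
    {τ : ℝ} (hτ : 0 < τ) {ρ φ : ι → ℝ}
    (h : Tendsto (fun i => W0 Q lam0 N L (ρ i) (φ i) τ) l (𝓝 0)) :
    Tendsto (fun i => (ρ i, φ i)) l (𝓝 (0, 0)) := by
  have hc : 0 < τ ^ (-(L : ℝ) / N) * lam0 := mul_pos (rpow_pos_of_pos hτ _) hlam0
  have hlim (c : ℝ) : Tendsto (fun i => √(2 / c * W0 Q lam0 N L (ρ i) (φ i) τ)) l (𝓝 0) := by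
    simpa using (h.const_mul (2 / c)).sqrt
  have hW (i : ι) : Q * ρ i ^ 2 + τ ^ (-(L : ℝ) / N) * lam0 * φ i ^ 2 =
      2 * W0 Q lam0 N L (ρ i) (φ i) τ := by unfold W0; ring
  have hsq {c : ℝ} (hc : 0 < c) {x : ι → ℝ}
      (hx : ∀ i, c * x i ^ 2 ≤ 2 * W0 Q lam0 N L (ρ i) (φ i) τ) : Tendsto x l (𝓝 0) :=
    squeeze_zero_norm (fun i => abs_le_sqrt (by
      rw [div_mul_eq_mul_div, le_div_iff₀ hc]; linarith [hx i])) (hlim c)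
  refine (hsq hQ fun i => ?_).prodMk_nhds (hsq hc fun i => ?_) <;> rw [← hW i]
  · nlinarith [mul_nonneg hc.le (sq_nonneg (φ i))]
  · nlinarith [mul_nonneg hQ.le (sq_nonneg (ρ i))]

theorem W0_le_rpow_of_W0_le {k μ τ₁ t ρ φ : ℝ} (hQ : 0 ≤ Q) (hlam0 : 0 ≤ lam0)
    (hτ₁ : 1 ≤ τ₁) (ht : τ₁ ≤ t) (h : W0 Q lam0 N L ρ φ t ≤ k * t ^ (-μ)) :
    W0 Q lam0 N L ρ φ τ₁ ≤ k * t ^ (-(μ - L / N)) := by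
  have ht0 : 0 < t := by linarith
  calc W0 Q lam0 N L ρ φ τ₁ ≤ t ^ ((L : ℝ) / N) * W0 Q lam0 N L ρ φ t :=
        W0_le_rpow_mul_W0 N L hQ hlam0 hτ₁ ht ρ φ
    _ ≤ t ^ ((L : ℝ) / N) * (k * t ^ (-μ)) := by gcongr
    _ = k * t ^ (-(μ - L / N)) := by
        rw [mul_left_comm, ← rpow_add ht0]; ring_nf

end W0

theorem lt_deriv_barrier_of_decay {Q lam0 ε κ C₀ t a b μ K d v ρ φ : ℝ} {N L : ℕ}
    (hQ : 0 ≤ Q) (hlam0 : 0 ≤ lam0) (hε : ε < 1) (hC₀ : 0 ≤ C₀) (ht : 1 ≤ t) (hK : 0 < K)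
    (hlow : (1 - ε) * W0 Q lam0 N L ρ φ t ≤ v)
    (hdec : d ≤ -κ * t ^ (-a) * v +
      C₀ * t ^ (-b) * (Q * |ρ| + t ^ (-(L : ℝ) / N) * lam0 * |φ|))
    (hv : v = K * t ^ (-μ))
    (hrate : μ * t ^ (a - 1) +
      2 * √(Q + lam0) * C₀ / √(1 - ε) / √K * t ^ (-(b - a - μ / 2)) < κ) :
    d < K * (-μ * t ^ (-μ - 1)) := by
  have h1ε : 0 < 1 - ε := by linarith
  have hW : √(W0 Q lam0 N L ρ φ t) ≤ √(K * t ^ (-μ)) / √(1 - ε) := by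
    rw [← sqrt_div' _ h1ε.le]
    exact sqrt_le_sqrt (by rw [le_div_iff₀ h1ε]; linarith)
  have hforce : C₀ * t ^ (-b) * (Q * |ρ| + t ^ (-(L : ℝ) / N) * lam0 * |φ|) ≤
      2 * √(Q + lam0) * C₀ / √(1 - ε) * t ^ (-b) * √(K * t ^ (-μ)) := by
    calc C₀ * t ^ (-b) * (Q * |ρ| + t ^ (-(L : ℝ) / N) * lam0 * |φ|)
        ≤ C₀ * t ^ (-b) * (2 * √(Q + lam0) * (√(K * t ^ (-μ)) / √(1 - ε))) := by
          gcongr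
          exact (forcing_le_sqrt_W0 N L hQ hlam0 ht ρ φ).trans (by gcongr)
      _ = 2 * √(Q + lam0) * C₀ / √(1 - ε) * t ^ (-b) * √(K * t ^ (-μ)) := by ring
  have := lt_deriv_barrier (by linarith) hK hrate
  subst hv
  linarith

theorem IsSolution.W0_le_rpow {Q lam0 τ₁ τs Δ ε κ C₀ a b μ k : ℝ} {N M L : ℕ}
    {A B V : ℝ → ℝ → ℝ → ℝ} {ρ φ : ℝ → ℝ} (hsol : IsSolution N M A B τ₁ ρ φ)
    (hV : Differentiable ℝ fun p : ℝ × ℝ × ℝ => V p.1 p.2.1 p.2.2)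
    (hQ : 0 ≤ Q) (hlam0 : 0 ≤ lam0) (hτ₁ : 1 ≤ τ₁) (hτs : τ₁ ≤ τs) (hε : ε < 1)
    (hC₀ : 0 ≤ C₀) (hk : 0 < k) (hkΔ : 2 * k ≤ Δ) (hμ : L / N < μ)
    (hlow : ∀ t ≥ τ₁, ∀ ρ φ : ℝ, W0 Q lam0 N L ρ φ τ₁ ≤ Δ →
      (1 - ε) * W0 Q lam0 N L ρ φ t ≤ V ρ φ t)
    (hdecay : ∀ t ≥ τ₁, ∀ ρ φ : ℝ, W0 Q lam0 N L ρ φ τ₁ ≤ Δ →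
      DV N M A B V ρ φ t ≤ -κ * t ^ (-a) * V ρ φ t +
        C₀ * t ^ (-b) * (Q * |ρ| + t ^ (-(L : ℝ) / N) * lam0 * |φ|))
    (hrate : ∀ t ≥ τs, μ * t ^ (a - 1) +
      2 * √(Q + lam0) * C₀ / √(1 - ε) / √((1 - ε) * k) * t ^ (-(b - a - μ / 2)) < κ)
    (hV₀ : V (ρ τs) (φ τs) τs ≤ (1 - ε) * k * τs ^ (-μ))
    (hW₀ : W0 Q lam0 N L (ρ τs) (φ τs) τ₁ ≤ 2 * k) :
    ∀ t ≥ τs, W0 Q lam0 N L (ρ t) (φ t) τ₁ ≤ k * t ^ (-(μ - L / N)) := by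
  have h1ε : 0 < 1 - ε := by linarith
  have hK : 0 < (1 - ε) * k := mul_pos h1ε hk
  have hW_of_barrier {t : ℝ} (ht : τs ≤ t) (hV : V (ρ t) (φ t) t ≤ (1 - ε) * k * t ^ (-μ))
      (hW : W0 Q lam0 N L (ρ t) (φ t) τ₁ ≤ 2 * k) :
      W0 Q lam0 N L (ρ t) (φ t) τ₁ ≤ k * t ^ (-(μ - L / N)) := by
    refine W0_le_rpow_of_W0_le N L hQ hlam0 hτ₁ (hτs.trans ht) (le_of_mul_le_mul_left ?_ h1ε)
    linarith [hlow t (hτs.trans ht) _ _ (hW.trans hkΔ)]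
  have hbarrier := le_and_le_of_deriv_lt_deriv_boundary (a := τs) (Δ := 2 * k)
    (v := fun t => V (ρ t) (φ t) t) (w := fun t => (1 - ε) * k * t ^ (-μ))
    (G := fun t => W0 Q lam0 N L (ρ t) (φ t) τ₁)
    (fun t ht => hsol.hasDerivAt_DV hV (hτs.trans ht))
    (fun t ht => (hasDerivAt_rpow_const (Or.inl (by linarith))).const_mul ((1 - ε) * k))
    (fun t ht => by
      have := (hsol t (hτs.trans ht)).1.continuousAt
      have := (hsol t (hτs.trans ht)).2.continuousAt
      unfold W0; fun_prop)
    hV₀ hW₀ ?_ ?_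
  · exact fun t ht => hW_of_barrier ht (hbarrier t ht).1 (hbarrier t ht).2
  · intro t ht hV hW
    have h₁ := hW_of_barrier ht hV hW
    have h₂ : t ^ (-(μ - L / N)) ≤ 1 :=
      rpow_le_one_of_one_le_of_nonpos (by linarith) (by linarith)
    nlinarith
  · intro t ht hW hV
    exact lt_deriv_barrier_of_decay hQ hlam0 hε hC₀ (by linarith) hK
      (hlow t (hτs.trans ht) _ _ (hW.trans hkΔ)) (hdecay t (hτs.trans ht) _ _ (hW.trans hkΔ))
      hV (hrate t ht)

theorem exists_barrier_exponent {N M D L n : ℕ} {κ : ℝ} (hN : 1 ≤ N) (hn : L + D ≤ n)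
    (hκ : M + D = N → (L : ℝ) / N < κ) :
    ∃ μ, (L : ℝ) / N < μ ∧ 0 < ((M : ℝ) + n + 1) / N - ((M : ℝ) + D) / N - μ / 2 ∧
      (((M : ℝ) + D) / N = 1 → μ < κ) := by
  have hN₀ : (0 : ℝ) < N := Nat.cast_pos.2 hN
  have hab : (L : ℝ) / N < 2 * (((M : ℝ) + n + 1) / N - ((M : ℝ) + D) / N) := by
    have : (L : ℝ) + D ≤ n := by exact_mod_cast hn
    rw [← sub_div, ← mul_div_assoc, div_lt_div_iff_of_pos_right hN₀]
    linarith
  by_cases hMDN : M + D = N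
  · obtain ⟨μ, h₁, h₂⟩ := exists_between (lt_min hab (hκ hMDN))
    exact ⟨μ, h₁, by linarith [h₂.trans_le (min_le_left _ _)],
      fun _ => h₂.trans_le (min_le_right _ _)⟩
  · obtain ⟨μ, h₁, h₂⟩ := exists_between hab
    refine ⟨μ, h₁, by linarith, fun h => absurd ?_ hMDN⟩
    exact_mod_cast (div_eq_one_iff_eq hN₀.ne').1 h

theorem W0_le_two_mul_and_le_barrier {Q lam0 τ₁ τs Δ ε k μ ρ φ v : ℝ} {N L : ℕ}
    (hlam0 : 0 ≤ lam0) (hτ₁ : 1 ≤ τ₁) (hτs : τ₁ ≤ τs) (hε : 0 ≤ ε) (hk : 0 ≤ k)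
    (hkΔ : 2 * k ≤ Δ) (hμ : 0 ≤ μ)
    (hup : W0 Q lam0 N L ρ φ τ₁ ≤ Δ → v ≤ (1 + ε) * W0 Q lam0 N L ρ φ τs)
    (h : W0 Q lam0 N L ρ φ τ₁ ≤ (1 - ε) / (1 + ε) * k * τs ^ (-μ)) :
    W0 Q lam0 N L ρ φ τ₁ ≤ 2 * k ∧ v ≤ (1 - ε) * k * τs ^ (-μ) := by
  have hτs₀ : 0 < τs := by linarith
  have hτsμ : τs ^ (-μ) ≤ 1 := rpow_le_one_of_one_le_of_nonpos (by linarith) (by linarith)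
  have hε₁ : (1 - ε) / (1 + ε) ≤ 1 := div_le_one_of_le₀ (by linarith) (by linarith)
  have hW : W0 Q lam0 N L ρ φ τ₁ ≤ 2 * k := by
    nlinarith [mul_le_mul hε₁ hτsμ (rpow_pos_of_pos hτs₀ (-μ)).le zero_le_one]
  refine ⟨hW, ?_⟩
  calc v ≤ (1 + ε) * W0 Q lam0 N L ρ φ τs := hup (hW.trans hkΔ)
    _ ≤ (1 + ε) * W0 Q lam0 N L ρ φ τ₁ := by
        gcongr; exact W0_le_W0_of_le N L hlam0 (by linarith) hτs _ _
    _ ≤ (1 + ε) * ((1 - ε) / (1 + ε) * k * τs ^ (-μ)) := by gcongr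
    _ = (1 - ε) * k * τs ^ (-μ) := by field_simp

theorem statement13_general (Q lam0 : ℝ) (hQ : 0 < Q) (hlam0 : 0 < lam0)
    (N M D L n : ℕ) (hN : 1 ≤ N) (hMDN : M + D ≤ N)
    (hn : L + D ≤ n)
    (τ₁ : ℝ) (hτ₁ : 1 ≤ τ₁)
    (A B : ℝ → ℝ → ℝ → ℝ)
    (Δ₁ ε κ C₀ : ℝ) (hε : ε ∈ Set.Ioo (0 : ℝ) 1) (hκ : 0 < κ)
    (hκ' : M + D = N → (L : ℝ) / (N : ℝ) < κ) (hC₀ : 0 ≤ C₀)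
    (V : ℝ → ℝ → ℝ → ℝ)
    (hV : ContDiff ℝ 1 fun p : ℝ × ℝ × ℝ => V p.1 p.2.1 p.2.2)
    (hsand : ∀ τ ≥ τ₁, ∀ ρ φ : ℝ, W0 Q lam0 N L ρ φ τ₁ ≤ Δ₁ ^ 2 →
      (1 - ε) * W0 Q lam0 N L ρ φ τ ≤ V ρ φ τ ∧ V ρ φ τ ≤ (1 + ε) * W0 Q lam0 N L ρ φ τ)
    (hdecay : ∀ τ ≥ τ₁, ∀ ρ φ : ℝ, W0 Q lam0 N L ρ φ τ₁ ≤ Δ₁ ^ 2 →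
      DV N M A B V ρ φ τ ≤ -κ * τ ^ (-((M : ℝ) + (D : ℝ)) / (N : ℝ)) * V ρ φ τ +
        C₀ * τ ^ (-((M : ℝ) + (n : ℝ) + 1) / (N : ℝ)) *
          (Q * |ρ| + τ ^ (-(L : ℝ) / (N : ℝ)) * lam0 * |φ|)) :
    ∀ ε' : ℝ, 0 < ε' → ε' < Δ₁ →
      ∃ δ > (0 : ℝ), ∃ τs ≥ τ₁,
        ∀ ρ φ : ℝ → ℝ, IsSolution N M A B τ₁ ρ φ →
          W0 Q lam0 N L (ρ τs) (φ τs) τ₁ ≤ δ ^ 2 →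
          (∀ τ ≥ τs, W0 Q lam0 N L (ρ τ) (φ τ) τ₁ ≤ ε' ^ 2) ∧
          (∃ η > (0 : ℝ), ∃ C > (0 : ℝ), ∃ T ≥ τs, ∀ τ ≥ T,
            W0 Q lam0 N L (ρ τ) (φ τ) τ₁ ≤ C * τ ^ (-η)) ∧
          Filter.Tendsto (fun τ => (ρ τ, φ τ)) Filter.atTop (nhds (0, 0)) := by
  obtain ⟨hε₀, hε₁⟩ := hε
  have ha : ((M : ℝ) + D) / N ≤ 1 := (div_le_one (Nat.cast_pos.2 hN)).2 (by exact_mod_cast hMDN)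
  obtain ⟨μ, hℓμ, he, hμκ⟩ := exists_barrier_exponent hN hn hκ'
  have hμ : 0 < μ := lt_of_le_of_lt (by positivity) hℓμ
  intro ε' hε' hε'Δ
  set k := ε' ^ 2 / 2
  have hk : 0 < k := by positivity
  have hkΔ : 2 * k ≤ Δ₁ ^ 2 := by
    have := pow_le_pow_left₀ hε'.le hε'Δ.le 2
    simp only [k]; linarith
  obtain ⟨T, hT⟩ := eventually_atTop.1 (eventually_mul_rpow_add_mul_rpow_lt
    (c := 2 * √(Q + lam0) * C₀ / √(1 - ε) / √((1 - ε) * k)) ha hκ hμκ he)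
  set τs := max τ₁ T
  have hδ₀ : 0 < (1 - ε) / (1 + ε) * k * τs ^ (-μ) :=
    mul_pos (mul_pos (div_pos (by linarith) (by linarith)) hk) (rpow_pos_of_pos (by positivity) _)
  refine ⟨_, sqrt_pos.2 hδ₀, τs, le_max_left _ _, fun ρ φ hsol hinit => ?_⟩
  obtain ⟨hW₀, hV₀⟩ := W0_le_two_mul_and_le_barrier hlam0.le hτ₁ (le_max_left _ _) hε₀.le hk.le
    hkΔ hμ.le (hsand τs (le_max_left _ _) _ _ · |>.2) (hinit.trans_eq (sq_sqrt hδ₀.le))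
  have hdecay' := hsol.W0_le_rpow (hV.differentiable one_ne_zero) hQ.le hlam0.le hτ₁
    (le_max_left _ _) hε₁ hC₀ hk hkΔ hℓμ (fun t ht ρ φ h => (hsand t ht ρ φ h).1)
    (a := ((M : ℝ) + D) / N) (b := ((M : ℝ) + n + 1) / N)
    (by simpa only [neg_div] using hdecay)
    (fun t ht => hT t ((le_max_right _ _).trans ht)) hV₀ hW₀
  refine ⟨fun t ht => (hdecay' t ht).trans ?_,
    ⟨μ - L / N, sub_pos.2 hℓμ, k, hk, τs, le_rfl, hdecay'⟩,
    tendsto_zero_of_tendsto_W0 N L hQ hlam0 (by linarith) (squeeze_zero'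
      (Eventually.of_forall fun t => W0_nonneg N L hQ.le hlam0.le (by linarith) _ _)
      ((eventually_ge_atTop τs).mono hdecay')
      (by simpa using (tendsto_rpow_neg_atTop (sub_pos.2 hℓμ)).const_mul k))⟩
  have : t ^ (-(μ - L / N)) ≤ 1 :=
    rpow_le_one_of_one_le_of_nonpos (hτ₁.trans ((le_max_left _ _).trans ht)) (by linarith)
  simp only [k] at this ⊢
  nlinarith

/-- persistence of phase locking under the remainders of averaging:
If `V` is sandwiched between `(1±ε) W₀` and satisfies the perturbed decay estimate
`𝒟V ≤ −κ τ^{−(M+D)/N} V + C₀ τ^{−(M+n+1)/N}(Q|ρ| + τ^{−L/N} λ₀|φ|)` on the region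
`{W₀(·,·,τ₁) ≤ Δ₁²}` (with `M ≤ D`, `M + D ≤ N`, `n ≥ L + D`, `κ > 0`, and `κ > L/N`
when `M + D = N`), then the zero solution is stable and attracting: for every
`ε' ∈ (0,Δ₁)` there are `δ > 0` and `τ_s ≥ τ₁` such that every solution with
`W₀(ρ(τ_s),φ(τ_s),τ₁) ≤ δ²` satisfies `W₀(ρ(τ),φ(τ),τ₁) ≤ ε'²` for all `τ ≥ τ_s`, and
moreover `W₀(ρ(τ),φ(τ),τ₁) ≤ C τ^{−η}` for some `η, C > 0` and all large `τ`; in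
particular `(ρ(τ),φ(τ)) → (0,0)`. -/
theorem statement13 (Q lam0 : ℝ) (hQ : 0 < Q) (hlam0 : 0 < lam0)
    (N M D L n : ℕ) (hN : 1 ≤ N) (hM : 1 ≤ M) (hMD : M ≤ D) (hMDN : M + D ≤ N)
    (hn : L + D ≤ n)
    (τ₁ : ℝ) (hτ₁ : 1 ≤ τ₁)
    (A B : ℝ → ℝ → ℝ → ℝ)
    (hA : Continuous fun p : ℝ × ℝ × ℝ => A p.1 p.2.1 p.2.2)
    (hB : Continuous fun p : ℝ × ℝ × ℝ => B p.1 p.2.1 p.2.2)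
    (hA0 : ∀ τ ≥ τ₁, A 0 0 τ = 0) (hB0 : ∀ τ ≥ τ₁, B 0 0 τ = 0)
    (Δ₁ ε κ C₀ : ℝ) (hΔ₁ : 0 < Δ₁) (hε : ε ∈ Set.Ioo (0 : ℝ) 1) (hκ : 0 < κ)
    (hκ' : M + D = N → (L : ℝ) / (N : ℝ) < κ) (hC₀ : 0 ≤ C₀)
    (V : ℝ → ℝ → ℝ → ℝ)
    (hV : ContDiff ℝ 1 fun p : ℝ × ℝ × ℝ => V p.1 p.2.1 p.2.2)
    (hsand : ∀ τ ≥ τ₁, ∀ ρ φ : ℝ, W0 Q lam0 N L ρ φ τ₁ ≤ Δ₁ ^ 2 →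
      (1 - ε) * W0 Q lam0 N L ρ φ τ ≤ V ρ φ τ ∧ V ρ φ τ ≤ (1 + ε) * W0 Q lam0 N L ρ φ τ)
    (hdecay : ∀ τ ≥ τ₁, ∀ ρ φ : ℝ, W0 Q lam0 N L ρ φ τ₁ ≤ Δ₁ ^ 2 →
      DV N M A B V ρ φ τ ≤ -κ * τ ^ (-((M : ℝ) + (D : ℝ)) / (N : ℝ)) * V ρ φ τ +
        C₀ * τ ^ (-((M : ℝ) + (n : ℝ) + 1) / (N : ℝ)) *
          (Q * |ρ| + τ ^ (-(L : ℝ) / (N : ℝ)) * lam0 * |φ|)) :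
    ∀ ε' : ℝ, 0 < ε' → ε' < Δ₁ →
      ∃ δ > (0 : ℝ), ∃ τs ≥ τ₁,
        ∀ ρ φ : ℝ → ℝ, IsSolution N M A B τ₁ ρ φ →
          W0 Q lam0 N L (ρ τs) (φ τs) τ₁ ≤ δ ^ 2 →
          (∀ τ ≥ τs, W0 Q lam0 N L (ρ τ) (φ τ) τ₁ ≤ ε' ^ 2) ∧
          (∃ η > (0 : ℝ), ∃ C > (0 : ℝ), ∃ T ≥ τs, ∀ τ ≥ T,
            W0 Q lam0 N L (ρ τ) (φ τ) τ₁ ≤ C * τ ^ (-η)) ∧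
          Filter.Tendsto (fun τ => (ρ τ, φ τ)) Filter.atTop (nhds (0, 0)) :=
  statement13_general Q lam0 hQ hlam0 N M D L n hN hMDN hn τ₁ hτ₁ A B Δ₁ ε κ C₀ hε hκ hκ' hC₀ V hV
    hsand hdecay
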